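/- arXiv:1806.01520 — 5 statements merged into one kernel-verified Lean document; each statement's English description precedes it below -/
import Mathlib

section
/- Let 0 < p ≤ 1, λ₁ ≥ 0, and let Ψ : ℝⁿ → ℝ be continuously differentiable. If w* ∈ ℝⁿ is a local minimizer of the function w ↦ Ψ(w) + λ₁ Σ_{i=1}^n |w_i|^p, then the scaled first-order necessary condition holds at w*: for every i ∈ {1,…,n}, w_i* · (∂Ψ/∂w_i)(w*) + p λ₁ |w_i*|^p = 0; equivalently, W* ∇Ψ(w*) + p λ₁ |w*|^p = 0 where W* = diag(w*) and |w*|^p = (|w₁*|^p, …, |w_n*|^p)ᵀ. -/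
/-! Scale the `i`-th coordinate of `w*` by `t` and differentiate at `t = 1`. Since
`|t wᵢ*|^p = t^p |wᵢ*|^p` for `t` near `1`, the penalty becomes differentiable along this
curve even when `|·|^p` is not differentiable at `wᵢ*`, with derivative `p λ₁ |wᵢ*|^p`,
while `Ψ` contributes `wᵢ* ∂ᵢΨ(w*)`. Fermat's rule at `t = 1` gives the condition. -/

theorem IsLocalMin.hasDerivAt_comp_eq_zero {E : Type*} [TopologicalSpace E] {f : E → ℝ}
    {γ : ℝ → E} {x : E} {t d : ℝ} (hf : IsLocalMin f x) (hγt : γ t = x)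
    (hγ : ContinuousAt γ t) (h : HasDerivAt (f ∘ γ) d t) : d = 0 :=
  ((hγt ▸ hf).comp_continuous hγ).hasDerivAt_eq_zero h

theorem hasDerivAt_abs_mul_rpow_one (c p : ℝ) :
    HasDerivAt (fun t : ℝ => |t * c| ^ p) (p * |c| ^ p) 1 := by
  have hpow : HasDerivAt (fun t : ℝ => t ^ p * |c| ^ p) (p * |c| ^ p) 1 := by
    simpa using (Real.hasDerivAt_rpow_const (p := p) (Or.inl one_ne_zero)).mul_const (|c| ^ p)
  refine hpow.congr_of_eventuallyEq ?_
  filter_upwards [lt_mem_nhds one_pos] with t ht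
  rw [abs_mul, Real.mul_rpow (abs_nonneg t) (abs_nonneg c), abs_of_pos ht]

section ScaleCoordinate

variable {ι : Type*} [Fintype ι] [DecidableEq ι]

theorem sum_abs_rpow_update (w : ι → ℝ) (i : ι) (s p : ℝ) :
    ∑ j, |Function.update w i s j| ^ p = |s| ^ p + ∑ j ∈ Finset.univ \ {i}, |w j| ^ p := by
  calc ∑ j, |Function.update w i s j| ^ p
      = ∑ j, Function.update (fun k => |w k| ^ p) i (|s| ^ p) j :=
        Finset.sum_congr rfl fun j _ => Function.apply_update (fun _ x => |x| ^ p) w i s j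
    _ = |s| ^ p + ∑ j ∈ Finset.univ \ {i}, |w j| ^ p :=
        Finset.sum_update_of_mem (Finset.mem_univ i) _ _

theorem hasDerivAt_sum_abs_rpow_update_mul (w : ι → ℝ) (i : ι) (p : ℝ) :
    HasDerivAt (fun t : ℝ => ∑ j, |Function.update w i (t * w i) j| ^ p)
      (p * |w i| ^ p) 1 := by
  simp_rw [sum_abs_rpow_update]
  exact (hasDerivAt_abs_mul_rpow_one (w i) p).add_const _

theorem hasDerivAt_update_mul (w : ι → ℝ) (i : ι) :
    HasDerivAt (fun t : ℝ => Function.update w i (t * w i)) (w i • Pi.single i (1 : ℝ)) 1 := by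
  simpa [Function.comp_def] using
    (hasDerivAt_update w i (1 * w i)).scomp 1 ((hasDerivAt_id 1).mul_const (w i))

theorem HasFDerivAt.hasDerivAt_comp_update_mul {Ψ : (ι → ℝ) → ℝ} {Ψ' : (ι → ℝ) →L[ℝ] ℝ}
    {w : ι → ℝ} (hΨ : HasFDerivAt Ψ Ψ' w) (i : ι) :
    HasDerivAt (fun t : ℝ => Ψ (Function.update w i (t * w i)))
      (w i * Ψ' (Pi.single i 1)) 1 := by
  rw [← smul_eq_mul, ← Ψ'.map_smul]
  exact hΨ.comp_hasDerivAt_of_eq 1 (hasDerivAt_update_mul w i) (by simp)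

end ScaleCoordinate

theorem scaled_first_order_necessary_condition_general {n : ℕ} (p l1 : ℝ)
    (Ψ : (Fin n → ℝ) → ℝ) (hΨ : ContDiff ℝ 1 Ψ)
    (wstar : Fin n → ℝ)
    (hmin : IsLocalMin (fun w => Ψ w + l1 * ∑ i, |w i| ^ p) wstar) :
    ∀ i, wstar i * fderiv ℝ Ψ wstar (Pi.single i 1) + p * l1 * |wstar i| ^ p = 0 := by
  intro i
  have hderiv :=
    ((hΨ.differentiable one_ne_zero wstar).hasFDerivAt.hasDerivAt_comp_update_mul i).add
      ((hasDerivAt_sum_abs_rpow_update_mul wstar i p).const_mul l1)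
  refine hmin.hasDerivAt_comp_eq_zero (by simp) (hasDerivAt_update_mul wstar i).continuousAt ?_
  rw [mul_assoc, mul_left_comm p]
  exact hderiv

/-- If `w*` is a local minimizer of `w ↦ Ψ(w) + λ₁ Σᵢ |wᵢ|^p` with
`0 < p ≤ 1`, `λ₁ ≥ 0` and `Ψ` continuously differentiable, then the scaled
first-order necessary condition `wᵢ* ∂Ψ/∂wᵢ(w*) + p λ₁ |wᵢ*|^p = 0` holds for every `i`. -/
theorem scaled_first_order_necessary_condition {n : ℕ} (p l1 : ℝ)
    (hp : 0 < p) (hp1 : p ≤ 1) (hl1 : 0 ≤ l1)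
    (Ψ : (Fin n → ℝ) → ℝ) (hΨ : ContDiff ℝ 1 Ψ)
    (wstar : Fin n → ℝ)
    (hmin : IsLocalMin (fun w => Ψ w + l1 * ∑ i, |w i| ^ p) wstar) :
    ∀ i, wstar i * fderiv ℝ Ψ wstar (Pi.single i 1) + p * l1 * |wstar i| ^ p = 0 :=
  scaled_first_order_necessary_condition_general p l1 Ψ hΨ wstar hmin
end

section
/- Let 0 < p ≤ 1, let Ψ : ℝⁿ → ℝ be continuously differentiable, and let λ₁ ≥ 0. If 0 ∈ ∂(Ψ + λ₁ R₁)(w) at a point w ∈ ℝⁿ, where R₁(w) = Σ_{i=1}^n |w_i|^p and ∂ denotes the general subgradient, then W ∇Ψ(w) + p λ₁ |w|^p = 0, where W = diag(w) and |w|^p = (|w₁|^p, …, |w_n|^p)ᵀ. -/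
/-!
At a regular subgradient `v` of `Ψ + λ₁ R₁` at a point `x` with `xᵢ ≠ 0`, the function is
differentiable along the `i`-th coordinate line, and a regular subgradient of a differentiable
function of one variable is its derivative; hence `vᵢ = ∂ᵢΨ(x) + p λ₁ sign(xᵢ) |xᵢ|^(p-1)`.
Multiplying by `xᵢ` removes the singularity of `|·|^p` at `0`: the identity
`xᵢ ∂ᵢΨ(x) + p λ₁ |xᵢ|^p = xᵢ vᵢ` also holds when `xᵢ = 0`, and both sides are continuous in
`(x, v)`. Passing to the limit along the sequences that define a general subgradient, where
`vᵢ → 0`, gives the theorem.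
-/

open Filter Topology

/-- `v` is a regular subgradient of `h` at `x`:
`h(y) ≥ h(x) + vᵀ(y - x) + o(‖y - x‖)` as `y → x`. -/
def RegSubgrad {n : ℕ} (h : (Fin n → ℝ) → ℝ) (x v : Fin n → ℝ) : Prop :=
  ∀ ε > (0 : ℝ), ∀ᶠ y in nhds x,
    h x + (∑ i, v i * (y i - x i)) - ε * ‖y - x‖ ≤ h y

/-- `v` is a (general) subgradient of `h` at `x`: there are sequences `xs → x`
and `vs → v` with `vs k` a regular subgradient of `h` at `xs k` for every `k`. -/
def GenSubgrad {n : ℕ} (h : (Fin n → ℝ) → ℝ) (x v : Fin n → ℝ) : Prop :=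
  ∃ xs vs : ℕ → (Fin n → ℝ),
    Tendsto xs atTop (nhds x) ∧ Tendsto vs atTop (nhds v) ∧
    ∀ k, RegSubgrad h (xs k) (vs k)

theorem eq_zero_of_forall_eventually_mul_le_mul_abs {c : ℝ}
    (h : ∀ ε > (0 : ℝ), ∀ᶠ t in 𝓝 (0 : ℝ), c * t ≤ ε * |t|) : c = 0 := by
  by_contra hc
  have hc_pos : 0 < |c| := abs_pos.mpr hc
  -- testing the bound at `t = s * c` with small `s > 0` gives `c² ≤ |c|² / 2`
  have hline : Tendsto (fun s : ℝ => s * c) (𝓝[>] 0) (𝓝 0) := by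
    simpa using tendsto_nhdsWithin_of_tendsto_nhds ((continuous_mul_const c).tendsto 0)
  obtain ⟨s, hs, hsc⟩ :=
    (eventually_mem_nhdsWithin.and (hline.eventually (h (|c| / 2) (half_pos hc_pos)))).exists
  rw [Set.mem_Ioi] at hs
  rw [abs_mul, abs_of_pos hs] at hsc
  have hsq : s * |c| ^ 2 ≤ s * |c| ^ 2 / 2 := by nlinarith [sq_abs c]
  linarith [mul_pos hs (pow_pos hc_pos 2)]

theorem HasDerivAt.eq_of_forall_eventually_le {g : ℝ → ℝ} {a d : ℝ} (hg : HasDerivAt g d 0)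
    (h : ∀ ε > (0 : ℝ), ∀ᶠ t in 𝓝 (0 : ℝ), g 0 + a * t - ε * |t| ≤ g t) : a = d := by
  refine sub_eq_zero.mp (eq_zero_of_forall_eventually_mul_le_mul_abs fun ε hε => ?_)
  filter_upwards [h (ε / 2) (half_pos hε),
    (hasDerivAt_iff_isLittleO.mp hg).def (half_pos hε)] with t hsub hderiv
  simp only [sub_zero, smul_eq_mul, Real.norm_eq_abs] at hderiv
  linarith [(abs_le.mp hderiv).2]

theorem RegSubgrad.eventually_le_along_line {n : ℕ} {h : (Fin n → ℝ) → ℝ} {x v : Fin n → ℝ}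
    (hv : RegSubgrad h x v) (e : Fin n → ℝ) :
    ∀ ε > (0 : ℝ), ∀ᶠ t in 𝓝 (0 : ℝ),
      h x + (∑ j, v j * e j) * t - ε * |t| ≤ h (x + t • e) := by
  intro ε hε
  have hline : Tendsto (fun t : ℝ => x + t • e) (𝓝 0) (𝓝 x) :=
    (by fun_prop : Continuous fun t : ℝ => x + t • e).tendsto' 0 x (by simp)
  filter_upwards [hline.eventually (hv (ε / (‖e‖ + 1)) (by positivity))] with t ht
  have hsum : ∑ j, v j * ((x + t • e) j - x j) = (∑ j, v j * e j) * t := by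
    simp only [Pi.add_apply, Pi.smul_apply, smul_eq_mul, add_sub_cancel_left, Finset.sum_mul]
    exact Finset.sum_congr rfl fun j _ => by ring
  have hnorm : ε / (‖e‖ + 1) * ‖x + t • e - x‖ ≤ ε * |t| := by
    rw [add_sub_cancel_left, norm_smul, Real.norm_eq_abs, div_mul_eq_mul_div,
      div_le_iff₀ (by positivity)]
    nlinarith [abs_nonneg t, norm_nonneg e]
  linarith

theorem RegSubgrad.sum_mul_eq_of_hasDerivAt {n : ℕ} {h : (Fin n → ℝ) → ℝ} {x v e : Fin n → ℝ}
    {d : ℝ} (hv : RegSubgrad h x v) (hd : HasDerivAt (fun t : ℝ => h (x + t • e)) d 0) :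
    ∑ j, v j * e j = d :=
  hd.eq_of_forall_eventually_le (by simpa using hv.eventually_le_along_line e)

theorem hasDerivAt_sum_comp_add_smul_single {n : ℕ} {f : ℝ → ℝ} {x : Fin n → ℝ} {i : Fin n}
    {d : ℝ} (hf : HasDerivAt f d (x i)) :
    HasDerivAt (fun t : ℝ => ∑ j, f ((x + t • Pi.single i 1 : Fin n → ℝ) j)) d 0 := by
  have hterm : ∀ j, HasDerivAt (fun t : ℝ => f ((x + t • Pi.single i 1 : Fin n → ℝ) j))
      (Pi.single (M := fun _ => ℝ) i d j) 0 := by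
    intro j
    rcases eq_or_ne j i with rfl | hj
    · simpa using HasDerivAt.comp_const_add (x j) 0 (by simpa using hf)
    · simpa [hj] using hasDerivAt_const (0 : ℝ) (f (x j))
  simpa using HasDerivAt.fun_sum (u := Finset.univ) fun j _ => hterm j

theorem hasDerivAt_abs_rpow_of_ne_zero {s : ℝ} (hs : s ≠ 0) (p : ℝ) :
    HasDerivAt (fun t : ℝ => |t| ^ p) (SignType.sign s * p * |s| ^ (p - 1)) s :=
  (hasDerivAt_abs hs).rpow_const (Or.inl (abs_ne_zero.mpr hs))

theorem mul_sign_mul_abs_rpow_sub_one {s : ℝ} (hs : s ≠ 0) (p : ℝ) :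
    s * (SignType.sign s * p * |s| ^ (p - 1)) = p * |s| ^ p := by
  have habs : |s| ≠ 0 := abs_ne_zero.mpr hs
  rw [Real.rpow_sub_one habs, ← mul_assoc, ← mul_assoc, self_mul_sign]
  field_simp

theorem RegSubgrad.mul_fderiv_single_add_eq {n : ℕ} {p l1 : ℝ} (hp : 0 < p)
    {Ψ : (Fin n → ℝ) → ℝ} {x v : Fin n → ℝ} (hΨ : DifferentiableAt ℝ Ψ x)
    (hv : RegSubgrad (fun y => Ψ y + l1 * ∑ j, |y j| ^ p) x v) (i : Fin n) :
    x i * fderiv ℝ Ψ x (Pi.single i 1) + p * l1 * |x i| ^ p = x i * v i := by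
  rcases eq_or_ne (x i) 0 with hxi | hxi
  · simp [hxi, Real.zero_rpow hp.ne']
  have hline : HasDerivAt (fun t : ℝ => x + t • Pi.single i 1) (Pi.single i 1) 0 := by
    simpa using ((hasDerivAt_id (0 : ℝ)).smul_const (Pi.single i (1 : ℝ))).const_add x
  have hΨ_line : HasDerivAt (fun t : ℝ => Ψ (x + t • Pi.single i 1))
      (fderiv ℝ Ψ x (Pi.single i 1)) 0 :=
    hΨ.hasFDerivAt.comp_hasDerivAt_of_eq 0 hline (by simp)
  have hpenalty_line :=
    hasDerivAt_sum_comp_add_smul_single (hasDerivAt_abs_rpow_of_ne_zero hxi p)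
  have hvi : v i = fderiv ℝ Ψ x (Pi.single i 1)
      + l1 * (SignType.sign (x i) * p * |x i| ^ (p - 1)) := by
    simpa [Pi.single_apply] using
      hv.sum_mul_eq_of_hasDerivAt (hΨ_line.add (hpenalty_line.const_mul l1))
  rw [hvi]
  linear_combination (-l1) * mul_sign_mul_abs_rpow_sub_one hxi p

theorem subgradient_implies_scaled_condition_general {n : ℕ} (p l1 : ℝ)
    (hp : 0 < p)
    (Ψ : (Fin n → ℝ) → ℝ) (hΨ : ContDiff ℝ 1 Ψ)
    (w : Fin n → ℝ)
    (hsub : GenSubgrad (fun x => Ψ x + l1 * ∑ i, |x i| ^ p) w 0) :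
    ∀ i, w i * fderiv ℝ Ψ w (Pi.single i 1) + p * l1 * |w i| ^ p = 0 := by
  intro i
  obtain ⟨xs, vs, hxs, hvs, hreg⟩ := hsub
  have hcont : Continuous fun y : Fin n → ℝ =>
      y i * fderiv ℝ Ψ y (Pi.single i 1) + p * l1 * |y i| ^ p :=
    ((continuous_apply i).mul ((hΨ.continuous_fderiv one_ne_zero).clm_apply continuous_const)).add
      (continuous_const.mul ((Real.continuous_rpow_const hp.le).comp (continuous_apply i).abs))
  have hrhs : Tendsto (fun k => xs k i * vs k i) atTop (𝓝 (w i * (0 : Fin n → ℝ) i)) :=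
    (((continuous_apply i).tendsto w).comp hxs).mul (((continuous_apply i).tendsto 0).comp hvs)
  rw [Pi.zero_apply, mul_zero] at hrhs
  refine tendsto_nhds_unique (((hcont.tendsto w).comp hxs).congr fun k => ?_) hrhs
  exact (hreg k).mul_fderiv_single_add_eq hp ((hΨ.differentiable one_ne_zero) (xs k)) i

/-- If `0 ∈ ∂(Ψ + λ₁ R₁)(w)` with `R₁(w) = Σᵢ |wᵢ|^p`, `0 < p ≤ 1`,
`λ₁ ≥ 0`, then the scaled first-order condition `wᵢ ∂Ψ/∂wᵢ(w) + p λ₁ |wᵢ|^p = 0`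
holds for every `i`. -/
theorem subgradient_implies_scaled_condition {n : ℕ} (p l1 : ℝ)
    (hp : 0 < p) (hp1 : p ≤ 1) (hl1 : 0 ≤ l1)
    (Ψ : (Fin n → ℝ) → ℝ) (hΨ : ContDiff ℝ 1 Ψ)
    (w : Fin n → ℝ)
    (hsub : GenSubgrad (fun x => Ψ x + l1 * ∑ i, |x i| ^ p) w 0) :
    ∀ i, w i * fderiv ℝ Ψ w (Pi.single i 1) + p * l1 * |w i| ^ p = 0 :=
  subgradient_implies_scaled_condition_general p l1 hp Ψ hΨ w hsub
end

section
/- Let 0 < p ≤ 1. Suppose (w*, λ*) ∈ ℝⁿ × ℝ^r together with multipliers ζ̂* ∈ ℝⁿ and β* ∈ ℝ^r satisfies the KKT conditions of the reduced one-level problem: (a) ∂f(w*)/∂w_i + Σ_{j∉I(w*)} (∂²G(w*, λ̄*)/∂w_i ∂w_j) ζ̂_j* + p(p−1) λ₁* |w_i*|^{p−2} ζ̂_i* = 0 for all i ∉ I(w*); (b) ∂f(w*)/∂w_i + Σ_{j∉I(w*)} (∂²G(w*, λ̄*)/∂w_i ∂w_j) ζ̂_j* + ζ̂_i* = 0 for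 all i ∈ I(w*); (c) Σ_{i∉I(w*)} p·sgn(w_i*) |w_i*|^{p−1} ζ̂_i* = β₁*; (d) Σ_{j∉I(w*)} (∂R_i(w*)/∂w_j) ζ̂_j* = β_i* for i = 2, …, r; (e) ∂G(w*, λ̄*)/∂w_i + p·sgn(w_i*) λ₁* |w_i*|^{p−1} = 0 for all i ∉ I(w*); (f) λ* ≥ 0, β* ≥ 0, (λ*)ᵀβ* = 0. Define ζ* ∈ ℝⁿ by ζ_i* = 0 for i ∈ I(w*) and ζ_i* = ζ̂_i* for i ∉ I(w*). Then (w*, λ*) together with (ζ*, β*) satisfies the SB-KKT conditions. -/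
/-! The SB-KKT conditions are the reduced KKT conditions rescaled by the diagonal matrix
`W* = diag(w*)`: multiplying (a) by `wᵢ*²` and (e) by `wᵢ*` turns `|wᵢ*|^(p-2)` and
`sgn(wᵢ*) |wᵢ*|^(p-1)` into `|wᵢ*|^p` (giving (i) and (ii) off `I(w*)`), while on `I(w*)`
both sides of (i) and (ii) vanish. Since `ζ*` is `ζ̂*` extended by zero, sums over `j ∉ I(w*)`
against `ζ̂*` become full sums against `ζ*`, which gives (iii) and (v). -/

open Filter Topology Finset

/-- Partial derivative `∂h/∂wᵢ (w)`. -/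
noncomputable def pd {n : ℕ} (h : (Fin n → ℝ) → ℝ) (w : Fin n → ℝ) (i : Fin n) : ℝ :=
  fderiv ℝ h w (Pi.single i 1)

/-- Second partial derivative `∂²h/∂wᵢ∂wⱼ (w)`. -/
noncomputable def pd2 {n : ℕ} (h : (Fin n → ℝ) → ℝ) (w : Fin n → ℝ) (i j : Fin n) : ℝ :=
  pd (fun x => pd h x j) w i

namespace Real

lemma sign_mul_self (x : ℝ) : sign x * x = |x| := by
  rcases lt_trichotomy x 0 with hx | rfl | hx
  · rw [sign_of_neg hx, abs_of_neg hx, neg_one_mul]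
  · simp
  · rw [sign_of_pos hx, abs_of_pos hx, one_mul]

lemma abs_rpow_eq_sq_mul_abs_rpow_sub_two {x : ℝ} (hx : x ≠ 0) (p : ℝ) :
    |x| ^ p = x ^ 2 * |x| ^ (p - 2) := by
  rw [← sq_abs, ← rpow_natCast, ← rpow_add (abs_pos.mpr hx)]
  norm_num

lemma abs_rpow_eq_mul_sign_mul_abs_rpow_sub_one {x : ℝ} (hx : x ≠ 0) (p : ℝ) :
    |x| ^ p = x * sign x * |x| ^ (p - 1) := by
  rw [mul_comm x, sign_mul_self, rpow_sub_one (abs_ne_zero.mpr hx), mul_div_cancel₀]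
  exact abs_ne_zero.mpr hx

end Real

lemma Finset.sum_mul_ite_eq_zero_eq_sum_filter_ne {ι M R : Type*} [Fintype ι] [Zero M]
    [DecidableEq M] [NonUnitalNonAssocSemiring R] (w : ι → M) (c z : ι → R) :
    ∑ j, c j * (if w j = 0 then 0 else z j) = ∑ j ∈ univ.filter (fun j => w j ≠ 0), c j * z j := by
  rw [sum_filter]
  exact sum_congr rfl fun j _ => by split_ifs <;> simp_all

theorem kkt_reduced_implies_sbkkt_general {n r : ℕ} [NeZero r] (p : ℝ)
    (hp : 0 < p)
    (f : (Fin n → ℝ) → ℝ) (R : Fin r → (Fin n → ℝ) → ℝ)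
    (G : (Fin n → ℝ) → (Fin r → ℝ) → ℝ)
    (wstar : Fin n → ℝ) (lamstar : Fin r → ℝ)
    (zetahat : Fin n → ℝ) (betastar : Fin r → ℝ)
    -- (a)
    (ha : ∀ i, wstar i ≠ 0 →
      pd f wstar i
        + (∑ j ∈ univ.filter (fun j => wstar j ≠ 0),
            pd2 (fun x => G x lamstar) wstar i j * zetahat j)
        + p * (p - 1) * lamstar 0 * |wstar i| ^ (p - 2) * zetahat i = 0)
    -- (c)
    (hc : (∑ i ∈ univ.filter (fun i => wstar i ≠ 0),
        p * Real.sign (wstar i) * |wstar i| ^ (p - 1) * zetahat i) = betastar 0)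
    -- (d)
    (hd : ∀ i : Fin r, i ≠ 0 →
      (∑ j ∈ univ.filter (fun j => wstar j ≠ 0), pd (R i) wstar j * zetahat j) = betastar i)
    -- (e)
    (he : ∀ i, wstar i ≠ 0 →
      pd (fun x => G x lamstar) wstar i
        + p * Real.sign (wstar i) * lamstar 0 * |wstar i| ^ (p - 1) = 0)
    -- (f)
    (hf1 : ∀ i, 0 ≤ lamstar i) (hf2 : ∀ i, 0 ≤ betastar i)
    (hf3 : ∑ i, lamstar i * betastar i = 0) :
    ∃ zetastar : Fin n → ℝ,
      (∀ i, zetastar i = if wstar i = 0 then 0 else zetahat i) ∧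
      -- (i)  W*² ∇f(w*) + H(w*, λ*) ζ* = 0
      (∀ i, (wstar i) ^ 2 * pd f wstar i
          + ((∑ j, (wstar i) ^ 2 * pd2 (fun x => G x lamstar) wstar i j * zetastar j)
            + lamstar 0 * p * (p - 1) * |wstar i| ^ p * zetastar i) = 0) ∧
      -- (ii)  W* ∇_w G(w*, λ̄*) + p λ₁* |w*|^p = 0
      (∀ i, wstar i * pd (fun x => G x lamstar) wstar i
          + p * lamstar 0 * |wstar i| ^ p = 0) ∧
      -- (iii)
      ((p * ∑ i ∈ univ.filter (fun i => wstar i ≠ 0),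
          Real.sign (wstar i) * |wstar i| ^ (p - 1) * zetastar i) = betastar 0) ∧
      -- (iv)
      (∀ i, wstar i = 0 → zetastar i = 0) ∧
      -- (v)
      (∀ i : Fin r, i ≠ 0 → (∑ j, pd (R i) wstar j * zetastar j) = betastar i) ∧
      -- (vi)
      ((∀ i, 0 ≤ lamstar i) ∧ (∀ i, 0 ≤ betastar i) ∧ ∑ i, lamstar i * betastar i = 0) := by
  set zetastar : Fin n → ℝ := fun i => if wstar i = 0 then 0 else zetahat i
  have hzeta : ∀ i, wstar i ≠ 0 → zetastar i = zetahat i := fun i hi => if_neg hi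
  refine ⟨zetastar, fun _ => rfl, fun i => ?_, fun i => ?_, ?_, fun i hi => if_pos hi,
    fun i hi => ?_, hf1, hf2, hf3⟩
  · by_cases hi : wstar i = 0
    · simp [zetastar, hi]
    · simp_rw [mul_assoc (wstar i ^ 2), ← mul_sum]
      rw [sum_mul_ite_eq_zero_eq_sum_filter_ne, hzeta i hi,
        Real.abs_rpow_eq_sq_mul_abs_rpow_sub_two hi]
      linear_combination wstar i ^ 2 * ha i hi
  · by_cases hi : wstar i = 0
    · simp [hi, Real.zero_rpow hp.ne']
    · rw [Real.abs_rpow_eq_mul_sign_mul_abs_rpow_sub_one hi]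
      linear_combination wstar i * he i hi
  · rw [← hc, mul_sum]
    refine sum_congr rfl fun i hi => ?_
    rw [hzeta i (mem_filter.mp hi).2]
    ring
  · rw [← hd i hi, sum_mul_ite_eq_zero_eq_sum_filter_ne]

/-- if `(w*, λ*)` together with multipliers `(ζ̂*, β*)` satisfies the KKT
conditions (a)–(f) of the reduced one-level problem, then `(w*, λ*)` together with
`(ζ*, β*)`, where `ζᵢ* = 0` for `i ∈ I(w*)` and `ζᵢ* = ζ̂ᵢ*` otherwise, satisfies the
SB-KKT conditions (i)–(vi). -/
theorem kkt_reduced_implies_sbkkt {n r : ℕ} [NeZero r] (p : ℝ)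
    (hp : 0 < p) (hp1 : p ≤ 1)
    (f g : (Fin n → ℝ) → ℝ) (R : Fin r → (Fin n → ℝ) → ℝ)
    (hfC : ContDiff ℝ 1 f) (hgC : ContDiff ℝ 2 g) (hRC : ∀ i, ContDiff ℝ 2 (R i))
    (G : (Fin n → ℝ) → (Fin r → ℝ) → ℝ)
    (hG : ∀ w lam, G w lam = g w + ∑ i ∈ univ.filter (fun i : Fin r => i ≠ 0), lam i * R i w)
    (wstar : Fin n → ℝ) (lamstar : Fin r → ℝ)
    (zetahat : Fin n → ℝ) (betastar : Fin r → ℝ)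
    -- (a)
    (ha : ∀ i, wstar i ≠ 0 →
      pd f wstar i
        + (∑ j ∈ univ.filter (fun j => wstar j ≠ 0),
            pd2 (fun x => G x lamstar) wstar i j * zetahat j)
        + p * (p - 1) * lamstar 0 * |wstar i| ^ (p - 2) * zetahat i = 0)
    -- (b)
    (hb : ∀ i, wstar i = 0 →
      pd f wstar i
        + (∑ j ∈ univ.filter (fun j => wstar j ≠ 0),
            pd2 (fun x => G x lamstar) wstar i j * zetahat j)
        + zetahat i = 0)
    -- (c)
    (hc : (∑ i ∈ univ.filter (fun i => wstar i ≠ 0),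
        p * Real.sign (wstar i) * |wstar i| ^ (p - 1) * zetahat i) = betastar 0)
    -- (d)
    (hd : ∀ i : Fin r, i ≠ 0 →
      (∑ j ∈ univ.filter (fun j => wstar j ≠ 0), pd (R i) wstar j * zetahat j) = betastar i)
    -- (e)
    (he : ∀ i, wstar i ≠ 0 →
      pd (fun x => G x lamstar) wstar i
        + p * Real.sign (wstar i) * lamstar 0 * |wstar i| ^ (p - 1) = 0)
    -- (f)
    (hf1 : ∀ i, 0 ≤ lamstar i) (hf2 : ∀ i, 0 ≤ betastar i)
    (hf3 : ∑ i, lamstar i * betastar i = 0) :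
    ∃ zetastar : Fin n → ℝ,
      (∀ i, zetastar i = if wstar i = 0 then 0 else zetahat i) ∧
      -- (i)  W*² ∇f(w*) + H(w*, λ*) ζ* = 0
      (∀ i, (wstar i) ^ 2 * pd f wstar i
          + ((∑ j, (wstar i) ^ 2 * pd2 (fun x => G x lamstar) wstar i j * zetastar j)
            + lamstar 0 * p * (p - 1) * |wstar i| ^ p * zetastar i) = 0) ∧
      -- (ii)  W* ∇_w G(w*, λ̄*) + p λ₁* |w*|^p = 0
      (∀ i, wstar i * pd (fun x => G x lamstar) wstar i
          + p * lamstar 0 * |wstar i| ^ p = 0) ∧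
      -- (iii)
      ((p * ∑ i ∈ univ.filter (fun i => wstar i ≠ 0),
          Real.sign (wstar i) * |wstar i| ^ (p - 1) * zetastar i) = betastar 0) ∧
      -- (iv)
      (∀ i, wstar i = 0 → zetastar i = 0) ∧
      -- (v)
      (∀ i : Fin r, i ≠ 0 → (∑ j, pd (R i) wstar j * zetastar j) = betastar i) ∧
      -- (vi)
      ((∀ i, 0 ≤ lamstar i) ∧ (∀ i, 0 ≤ betastar i) ∧ ∑ i, lamstar i * betastar i = 0) :=
  kkt_reduced_implies_sbkkt_general p hp f R G wstar lamstar zetahat betastar ha hc hd he hf1 hf2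
    hf3
end

section
/- Let 0 < p ≤ 1. Let {w^k} ⊆ ℝⁿ, {λ^k} ⊆ ℝ^r, {μ_k} ⊆ (0, ∞), and {ε^k} ⊆ ℝⁿ be sequences such that w^k → w*, λ^k → λ*, μ_k → 0, ε^k → 0, λ₁^k > 0 for all k, λ₁* > 0, and for all k the approximate stationarity condition ∇_w G(w^k, λ̄^k) + λ₁^k ∇φ_{μ_k}(w^k) = ε^k holds. If p = 1, assume additionally that λ₁* ≠ |∂G(w*, λ̄*)/∂w_i| for every i ∈ I(w*). Then there exists γ > 0 such that for all sufficiently large k and every i ∈ I(w*), μ_k² ≥ γ |w_i^k|^{2/(2−p)}. -/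
/-!
Fix `i ∈ I(w*)`, put `q = 2 / (2 - p)` and `s = wᵢ² + μ²`. Stationarity gives
`λ₁ p |wᵢ| s^(p/2 - 1) = |εᵢ - ∂ᵢG|`, so the ratio `ρ = |wᵢ| s^(p/2 - 1)` converges to
`|∂ᵢG(w*, λ̄*)| / (p λ₁*)` and is eventually below any `C` above that limit. Raising
`|wᵢ| ≤ C s^(1 - p/2)` to the power `q` gives `C^(-q) |wᵢ|^q ≤ wᵢ² + μ²`, that is
`(C^(-q) - |wᵢ|^(2 - q)) |wᵢ|^q ≤ μ²`. For `p < 1` the term `|wᵢ|^(2 - q)` tends to `0` with `wᵢ`.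
For `p = 1` it is `1`, but then `ρ ≤ 1` always and A3 makes the limit `< 1`, so `C` can be taken
below `1`, where `C^(-2) > 1`. Finitely many coordinates then share the smallest constant.
-/

open Filter Topology Finset

section PartialDerivative

variable {n r : ℕ}

lemma pd_add_sum_mul {g : (Fin n → ℝ) → ℝ} {R : Fin r → (Fin n → ℝ) → ℝ} {S : Finset (Fin r)}
    {y : Fin n → ℝ} (hg : DifferentiableAt ℝ g y) (hR : ∀ j ∈ S, DifferentiableAt ℝ (R j) y)
    (c : Fin r → ℝ) (i : Fin n) :
    pd (fun x => g x + ∑ j ∈ S, c j * R j x) y i = pd g y i + ∑ j ∈ S, c j * pd (R j) y i := by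
  have hsum : HasFDerivAt (fun x => g x + ∑ j ∈ S, c j * R j x)
      (fderiv ℝ g y + ∑ j ∈ S, c j • fderiv ℝ (R j) y) y :=
    hg.hasFDerivAt.add (HasFDerivAt.fun_sum fun j hj => (hR j hj).hasFDerivAt.const_mul (c j))
  simp [pd, hsum.fderiv]

lemma continuous_pd {h : (Fin n → ℝ) → ℝ} (hh : ContDiff ℝ 1 h) (i : Fin n) :
    Continuous fun y => pd h y i :=
  (hh.continuous_fderiv one_ne_zero).clm_apply continuous_const

lemma tendsto_pd_add_sum_mul {α : Type*} {l : Filter α} {g : (Fin n → ℝ) → ℝ}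
    {R : Fin r → (Fin n → ℝ) → ℝ} (hg : ContDiff ℝ 1 g) (hR : ∀ j, ContDiff ℝ 1 (R j))
    (S : Finset (Fin r)) {w : α → Fin n → ℝ} {wstar : Fin n → ℝ} {c : α → Fin r → ℝ}
    {cstar : Fin r → ℝ} (hw : Tendsto w l (𝓝 wstar)) (hc : Tendsto c l (𝓝 cstar)) (i : Fin n) :
    Tendsto (fun k => pd (fun x => g x + ∑ j ∈ S, c k j * R j x) (w k) i) l
      (𝓝 (pd (fun x => g x + ∑ j ∈ S, cstar j * R j x) wstar i)) := by
  have hsplit (b : Fin r → ℝ) y := pd_add_sum_mul (S := S) (hg.differentiable one_ne_zero y)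
    (fun j _ => (hR j).differentiable one_ne_zero y) b i
  simp only [hsplit]
  exact ((continuous_pd hg i).tendsto wstar).comp hw |>.add <| tendsto_finsetSum _ fun j _ =>
    (tendsto_pi_nhds.1 hc j).mul (((continuous_pd (hR j) i).tendsto wstar).comp hw)

end PartialDerivative

lemma abs_mul_rpow_le_one {x m : ℝ} (hm : m ≠ 0) :
    |x| * (x ^ 2 + m ^ 2) ^ ((1 : ℝ) / 2 - 1) ≤ 1 := by
  have hs : 0 < x ^ 2 + m ^ 2 := by positivity
  have hx : |x| ≤ (x ^ 2 + m ^ 2) ^ ((1 : ℝ) / 2) := by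
    rw [← Real.sqrt_eq_rpow, ← Real.sqrt_sq_eq_abs]
    exact Real.sqrt_le_sqrt (by nlinarith)
  calc |x| * (x ^ 2 + m ^ 2) ^ ((1 : ℝ) / 2 - 1)
      ≤ (x ^ 2 + m ^ 2) ^ ((1 : ℝ) / 2) * (x ^ 2 + m ^ 2) ^ ((1 : ℝ) / 2 - 1) := by gcongr
    _ = 1 := by rw [← Real.rpow_add hs]; norm_num

lemma rpow_neg_sub_rpow_mul_rpow_le_sq {p C x m : ℝ} (hp : p < 2) (hC : 0 < C) (hm : m ≠ 0)
    (h : |x| * (x ^ 2 + m ^ 2) ^ (p / 2 - 1) ≤ C) :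
    (C ^ (-(2 / (2 - p))) - |x| ^ (2 - 2 / (2 - p))) * |x| ^ (2 / (2 - p)) ≤ m ^ 2 := by
  set q := 2 / (2 - p) with hq
  set s := x ^ 2 + m ^ 2 with hs_def
  have hs : 0 < s := by positivity
  have h2p : 2 - p ≠ 0 := by linarith
  have hq0 : 0 < q := div_pos two_pos (by linarith)
  have hx : |x| ≤ C * s ^ (1 - p / 2) := by
    calc |x| = |x| * s ^ (p / 2 - 1) * s ^ (1 - p / 2) := by
          rw [mul_assoc, ← Real.rpow_add hs]; norm_num
      _ ≤ C * s ^ (1 - p / 2) := by gcongr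
  have hxq : |x| ^ q ≤ C ^ q * s := by
    calc |x| ^ q ≤ (C * s ^ (1 - p / 2)) ^ q := by gcongr
      _ = C ^ q * s := by
        rw [Real.mul_rpow hC.le (by positivity), ← Real.rpow_mul hs.le,
          show (1 - p / 2) * q = 1 by rw [hq]; field_simp, Real.rpow_one]
  have hx2 : x ^ 2 = |x| ^ (2 - q) * |x| ^ q := by
    rw [← Real.rpow_add' (abs_nonneg x) (by norm_num), sub_add_cancel, Real.rpow_two, sq_abs]
  calc (C ^ (-q) - |x| ^ (2 - q)) * |x| ^ q = C ^ (-q) * |x| ^ q - x ^ 2 := by rw [hx2]; ring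
    _ ≤ C ^ (-q) * (C ^ q * s) - x ^ 2 := by gcongr
    _ = m ^ 2 := by
      rw [← mul_assoc, ← Real.rpow_add hC, neg_add_cancel, Real.rpow_zero, one_mul, hs_def]; ring

-- `0 ^ (2 - 2 / (2 - p))` is `0` for `p < 1` but `1` for `p = 1`, as `0 ^ 0 = 1`.
lemma exists_gt_and_zero_rpow_lt_rpow_neg {p ρ : ℝ} (hp1 : p ≤ 1) (hρ : 0 ≤ ρ)
    (h1 : p = 1 → ρ < 1) : ∃ C, ρ < C ∧ (0 : ℝ) ^ (2 - 2 / (2 - p)) < C ^ (-(2 / (2 - p))) := by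
  rcases hp1.lt_or_eq with hp | rfl
  · refine ⟨ρ + 1, by linarith, ?_⟩
    have hq : 2 / (2 - p) < 2 := by rw [div_lt_iff₀ (by linarith)]; linarith
    rw [Real.zero_rpow (by linarith)]
    exact Real.rpow_pos_of_pos (by linarith) _
  · have hρ1 := h1 rfl
    refine ⟨(ρ + 1) / 2, by linarith, ?_⟩
    rw [show (2 : ℝ) - 2 / (2 - 1) = 0 by norm_num, Real.rpow_zero]
    exact Real.one_lt_rpow_of_pos_of_lt_one_of_neg (by linarith) (by linarith) (by norm_num)

lemma exists_pos_eventually_mul_rpow_le_sq {α : Type*} {l : Filter α} [l.NeBot] {p ρ : ℝ}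
    (hp1 : p ≤ 1) {x m : α → ℝ} (hm : ∀ k, m k ≠ 0) (hx : Tendsto x l (𝓝 0))
    (hρ : Tendsto (fun k => |x k| * (x k ^ 2 + m k ^ 2) ^ (p / 2 - 1)) l (𝓝 ρ))
    (h1 : p = 1 → ρ ≠ 1) :
    ∃ γ > 0, ∀ᶠ k in l, γ * |x k| ^ (2 / (2 - p)) ≤ m k ^ 2 := by
  set q := 2 / (2 - p)
  have hρ0 : 0 ≤ ρ := ge_of_tendsto' hρ fun k => by positivity
  have hρ1 (hp : p = 1) : ρ < 1 := by
    subst hp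
    exact (le_of_tendsto' hρ fun k => abs_mul_rpow_le_one (hm k)).lt_of_ne (h1 rfl)
  obtain ⟨C, hρC, hC⟩ := exists_gt_and_zero_rpow_lt_rpow_neg hp1 hρ0 hρ1
  set γ := (C ^ (-q) - (0 : ℝ) ^ (2 - q)) / 2
  have hγ : 0 < γ := by simp only [γ]; linarith
  have hpow : Tendsto (fun k => |x k| ^ (2 - q)) l (𝓝 ((0 : ℝ) ^ (2 - q))) := by
    have hq : 0 ≤ 2 - q := by
      rw [sub_nonneg, div_le_iff₀ (by linarith)]; linarith
    exact ((Real.continuous_rpow_const hq).tendsto 0).comp (by simpa using hx.abs)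
  refine ⟨γ, hγ, ?_⟩
  filter_upwards [hρ.eventually_lt_const hρC, hpow.eventually_lt_const (lt_add_of_pos_right _ hγ)]
    with k hkρ hkx
  calc γ * |x k| ^ q ≤ (C ^ (-q) - |x k| ^ (2 - q)) * |x k| ^ q := by
        gcongr; simp only [γ] at hkx ⊢; linarith
    _ ≤ m k ^ 2 :=
      rpow_neg_sub_rpow_mul_rpow_le_sq (by linarith) (hρ0.trans_lt hρC) (hm k) hkρ.le

lemma abs_mul_eq_abs_div_of_mul_eq {a p x y E : ℝ} (ha : 0 < a) (hp : 0 < p) (hy : 0 ≤ y)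
    (h : a * (p * x * y) = E) : |x| * y = |E| / (p * a) := by
  rw [← h, abs_mul, abs_mul, abs_mul, abs_of_pos ha, abs_of_pos hp, abs_of_nonneg hy]
  field_simp

lemma exists_pos_eventually_forall_mul_le {ι α : Type*} [Finite ι] {l : Filter α}
    {f : ι → α → ℝ} {g : α → ℝ} (hf : ∀ i k, 0 ≤ f i k)
    (h : ∀ i, ∃ γ > 0, ∀ᶠ k in l, γ * f i k ≤ g k) :
    ∃ γ > 0, ∀ᶠ k in l, ∀ i, γ * f i k ≤ g k := by
  choose γ hγ hfg using h
  have hsmall : ∀ᶠ c in 𝓝[>] (0 : ℝ), 0 < c ∧ ∀ i, c ≤ γ i :=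
    eventually_mem_nhdsWithin.and <| eventually_all.2 fun i =>
      (eventually_le_nhds (hγ i)).filter_mono nhdsWithin_le_nhds
  obtain ⟨c, hc0, hc⟩ := hsmall.exists
  exact ⟨c, hc0, (eventually_all.2 hfg).mono fun k hk i =>
    (mul_le_mul_of_nonneg_right (hc i) (hf i k)).trans (hk i)⟩

theorem smoothing_parameter_lower_bound_general {n r : ℕ} [NeZero r] (p : ℝ)
    (hp : 0 < p) (hp1 : p ≤ 1)
    (g : (Fin n → ℝ) → ℝ) (R : Fin r → (Fin n → ℝ) → ℝ)
    (hgC : ContDiff ℝ 2 g) (hRC : ∀ i, ContDiff ℝ 2 (R i))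
    (G : (Fin n → ℝ) → (Fin r → ℝ) → ℝ)
    (hG : ∀ w lam, G w lam = g w + ∑ i ∈ univ.filter (fun i : Fin r => i ≠ 0), lam i * R i w)
    (wstar : Fin n → ℝ) (lamstar : Fin r → ℝ)
    (w : ℕ → Fin n → ℝ) (lam : ℕ → Fin r → ℝ) (μ : ℕ → ℝ) (eps : ℕ → Fin n → ℝ)
    (hμpos : ∀ k, 0 < μ k)
    (hw : Tendsto w atTop (nhds wstar))
    (hlam : Tendsto lam atTop (nhds lamstar))
    (heps : Tendsto eps atTop (nhds 0))
    (hlampos : ∀ k, 0 < lam k 0) (hlamstar : 0 < lamstar 0)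
    -- approximate stationarity: ∇_w G(wᵏ, λ̄ᵏ) + λ₁ᵏ ∇φ_{μₖ}(wᵏ) = εᵏ
    (hstat : ∀ k i, pd (fun x => G x (lam k)) (w k) i
        + lam k 0 * (p * w k i * ((w k i) ^ 2 + (μ k) ^ 2) ^ (p / 2 - 1)) = eps k i)
    -- A3 (only needed for p = 1)
    (hA3 : p = 1 → ∀ i, wstar i = 0 →
      lamstar 0 ≠ |pd (fun x => G x lamstar) wstar i|) :
    ∃ γ > (0 : ℝ), ∀ᶠ k in atTop, ∀ i, wstar i = 0 →
      γ * |w k i| ^ (2 / (2 - p)) ≤ (μ k) ^ 2 := by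
  have hD (i : Fin n) : Tendsto (fun k => pd (fun x => G x (lam k)) (w k) i) atTop
      (𝓝 (pd (fun x => G x lamstar) wstar i)) := by
    simpa only [hG] using tendsto_pd_add_sum_mul (hgC.of_le one_le_two)
      (fun j => (hRC j).of_le one_le_two) _ hw hlam i
  have hcoord (i : {i // wstar i = 0}) :
      ∃ γ > 0, ∀ᶠ k in atTop, γ * |w k i| ^ (2 / (2 - p)) ≤ μ k ^ 2 := by
    obtain ⟨i, hi⟩ := i
    have hρ : Tendsto (fun k => |w k i| * (w k i ^ 2 + μ k ^ 2) ^ (p / 2 - 1)) atTop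
        (𝓝 (|pd (fun x => G x lamstar) wstar i| / (p * lamstar 0))) := by
      refine Tendsto.congr (fun k => (abs_mul_eq_abs_div_of_mul_eq (hlampos k) hp
        (by positivity) (eq_sub_of_add_eq' (hstat k i))).symm) ?_
      have hE := ((tendsto_pi_nhds.1 heps i).sub (hD i)).abs
      rw [Pi.zero_apply, zero_sub, abs_neg] at hE
      exact hE.div (tendsto_const_nhds.mul (tendsto_pi_nhds.1 hlam 0)) (by positivity)
    refine exists_pos_eventually_mul_rpow_le_sq hp1 (fun k => (hμpos k).ne')
      (by simpa [hi] using tendsto_pi_nhds.1 hw i) hρ fun hp_one => ?_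
    subst hp_one
    rw [one_mul, Ne, div_eq_one_iff_eq hlamstar.ne']
    exact (hA3 rfl i hi).symm
  obtain ⟨γ, hγ, h⟩ := exists_pos_eventually_forall_mul_le (fun _ _ => by positivity) hcoord
  exact ⟨γ, hγ, h.mono fun k hk i hi => hk ⟨i, hi⟩⟩

/-- Proposition 1: under Assumptions A1 and A3, the smoothing parameter
`μₖ` goes to `0` not faster than `max_{i ∈ I(w*)} |wᵢᵏ|^{1/(2−p)}`: there is `γ > 0`
with `μₖ² ≥ γ |wᵢᵏ|^{2/(2−p)}` for all large `k` and all `i ∈ I(w*)`. -/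
theorem smoothing_parameter_lower_bound {n r : ℕ} [NeZero r] (p : ℝ)
    (hp : 0 < p) (hp1 : p ≤ 1)
    (g : (Fin n → ℝ) → ℝ) (R : Fin r → (Fin n → ℝ) → ℝ)
    (hgC : ContDiff ℝ 2 g) (hRC : ∀ i, ContDiff ℝ 2 (R i))
    (G : (Fin n → ℝ) → (Fin r → ℝ) → ℝ)
    (hG : ∀ w lam, G w lam = g w + ∑ i ∈ univ.filter (fun i : Fin r => i ≠ 0), lam i * R i w)
    (wstar : Fin n → ℝ) (lamstar : Fin r → ℝ)
    (w : ℕ → Fin n → ℝ) (lam : ℕ → Fin r → ℝ) (μ : ℕ → ℝ) (eps : ℕ → Fin n → ℝ)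
    (hμpos : ∀ k, 0 < μ k)
    (hw : Tendsto w atTop (nhds wstar))
    (hlam : Tendsto lam atTop (nhds lamstar))
    (hμ : Tendsto μ atTop (nhds 0))
    (heps : Tendsto eps atTop (nhds 0))
    (hlampos : ∀ k, 0 < lam k 0) (hlamstar : 0 < lamstar 0)
    -- approximate stationarity: ∇_w G(wᵏ, λ̄ᵏ) + λ₁ᵏ ∇φ_{μₖ}(wᵏ) = εᵏ
    (hstat : ∀ k i, pd (fun x => G x (lam k)) (w k) i
        + lam k 0 * (p * w k i * ((w k i) ^ 2 + (μ k) ^ 2) ^ (p / 2 - 1)) = eps k i)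
    -- A3 (only needed for p = 1)
    (hA3 : p = 1 → ∀ i, wstar i = 0 →
      lamstar 0 ≠ |pd (fun x => G x lamstar) wstar i|) :
    ∃ γ > (0 : ℝ), ∀ᶠ k in atTop, ∀ i, wstar i = 0 →
      γ * |w k i| ^ (2 / (2 - p)) ≤ (μ k) ^ 2 :=
  smoothing_parameter_lower_bound_general p hp hp1 g R hgC hRC G hG wstar lamstar w lam μ eps hμpos
    hw hlam heps hlampos hlamstar hstat hA3
end

section
/- Let 0 < p ≤ 1, let γ > 0, and let {w_k} ⊆ ℝ and {μ_k} ⊆ (0, ∞) be sequences with w_k → 0, μ_k → 0, and μ_k² ≥ γ |w_k|^{2/(2−p)} for all sufficiently large k. Then μ_k² + (p−1) w_k² ≥ 0 for all sufficiently large k, (p−1) w_k² / μ_k² → 0 (and in the case p = 1 the quantity |w_k² / μ_k²| is eventually bounded by 1/γ), and consequently p (w_k² + μ_k²)^{p/2 − 2} (μ_k² + (p−1) w_k²) → ∞. -/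
/-! Since `μₖ² ≥ γ |wₖ|^{2/(2−p)}`, the ratio `wₖ²/μₖ²` is at most `γ⁻¹ |wₖ|^{2(1−p)/(2−p)}`,
which is eventually `≤ γ⁻¹` and tends to `0` when `p < 1`. Hence `μₖ² + (p−1) wₖ² ≥ μₖ²/2` and
`wₖ² + μₖ² ≤ (1 + γ⁻¹) μₖ²` eventually, so the Hessian entry is bounded below by a positive
multiple of `(μₖ²)^{p/2−1}`, which blows up because `p < 2`. -/

open Filter Topology

lemma sq_div_sq_le_of_mul_abs_rpow_le {p γ w μ : ℝ} (hp : p < 2) (hγ : 0 < γ) (hμ : μ ≠ 0)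
    (h : γ * |w| ^ (2 / (2 - p)) ≤ μ ^ 2) :
    w ^ 2 / μ ^ 2 ≤ γ⁻¹ * |w| ^ (2 * (1 - p) / (2 - p)) := by
  have hexp : 2 / (2 - p) + 2 * (1 - p) / (2 - p) = 2 := by
    field_simp [(by linarith : (2 - p) ≠ 0)]
    ring
  have hsplit : w ^ 2 = |w| ^ (2 / (2 - p)) * |w| ^ (2 * (1 - p) / (2 - p)) := by
    rw [← Real.rpow_add' (abs_nonneg w) (by rw [hexp]; norm_num), hexp, Real.rpow_two, sq_abs]
  rw [div_le_iff₀ (by positivity), hsplit]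
  calc |w| ^ (2 / (2 - p)) * |w| ^ (2 * (1 - p) / (2 - p))
      ≤ γ⁻¹ * μ ^ 2 * |w| ^ (2 * (1 - p) / (2 - p)) := by
        gcongr
        rwa [inv_mul_eq_div, le_div_iff₀' hγ]
    _ = γ⁻¹ * |w| ^ (2 * (1 - p) / (2 - p)) * μ ^ 2 := by ring

section Sequences

variable {ι : Type*} {l : Filter ι} {p γ : ℝ} {w μ : ι → ℝ}

lemma eventually_sq_div_sq_le_inv (hp1 : p ≤ 1) (hγ : 0 < γ) (hμ : ∀ k, μ k ≠ 0)
    (hw : Tendsto w l (𝓝 0)) (hbound : ∀ᶠ k in l, γ * |w k| ^ (2 / (2 - p)) ≤ μ k ^ 2) :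
    ∀ᶠ k in l, w k ^ 2 / μ k ^ 2 ≤ γ⁻¹ := by
  have hsmall : ∀ᶠ k in l, |w k| ≤ 1 := by
    simpa using hw.abs.eventually (eventually_le_nhds (by norm_num : |(0 : ℝ)| < 1))
  filter_upwards [hbound, hsmall] with k hk hk1
  have hexp : 0 ≤ 2 * (1 - p) / (2 - p) := div_nonneg (by linarith) (by linarith)
  calc w k ^ 2 / μ k ^ 2 ≤ γ⁻¹ * |w k| ^ (2 * (1 - p) / (2 - p)) :=
        sq_div_sq_le_of_mul_abs_rpow_le (by linarith) hγ (hμ k) hk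
    _ ≤ γ⁻¹ := mul_le_of_le_one_right (inv_nonneg.2 hγ.le)
        (Real.rpow_le_one (abs_nonneg _) hk1 hexp)

lemma tendsto_sub_one_mul_sq_div_sq (hp1 : p ≤ 1) (hγ : 0 < γ) (hμ : ∀ k, μ k ≠ 0)
    (hw : Tendsto w l (𝓝 0)) (hbound : ∀ᶠ k in l, γ * |w k| ^ (2 / (2 - p)) ≤ μ k ^ 2) :
    Tendsto (fun k => (p - 1) * w k ^ 2 / μ k ^ 2) l (𝓝 0) := by
  rcases hp1.eq_or_lt with rfl | hp1
  · simpa using tendsto_const_nhds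
  have hexp : 0 < 2 * (1 - p) / (2 - p) := div_pos (by linarith) (by linarith)
  have hdom : Tendsto (fun k => γ⁻¹ * |w k| ^ (2 * (1 - p) / (2 - p))) l (𝓝 0) := by
    simpa using ((by simpa using hw.abs : Tendsto (fun k => |w k|) l (𝓝 0)).rpow_const_nhds_zero
      hexp).const_mul γ⁻¹
  have hratio : Tendsto (fun k => w k ^ 2 / μ k ^ 2) l (𝓝 0) :=
    squeeze_zero' (Eventually.of_forall fun k => by positivity)
      (hbound.mono fun k hk => sq_div_sq_le_of_mul_abs_rpow_le (by linarith) hγ (hμ k) hk) hdom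
  simpa [mul_div_assoc] using hratio.const_mul (p - 1)

lemma tendsto_sq_rpow_atTop (hp : p < 2) (hμ : ∀ k, μ k ≠ 0) (hμ0 : Tendsto μ l (𝓝 0)) :
    Tendsto (fun k => (μ k ^ 2) ^ (p / 2 - 1)) l atTop := by
  have hsq : Tendsto (fun k => μ k ^ 2) l (𝓝[>] 0) :=
    tendsto_nhdsWithin_iff.2
      ⟨by simpa using hμ0.pow 2, Eventually.of_forall fun k => sq_pos_of_ne_zero (hμ k)⟩
  exact (tendsto_rpow_neg_nhdsGT_zero (by linarith)).comp hsq

end Sequences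

lemma mul_rpow_le_hessian_entry {p w μ C : ℝ} (hp : 0 ≤ p) (hp4 : p ≤ 4) (hμ : μ ≠ 0)
    (hC : w ^ 2 ≤ C * μ ^ 2) (hhalf : μ ^ 2 / 2 ≤ μ ^ 2 + (p - 1) * w ^ 2) :
    (μ ^ 2) ^ (p / 2 - 1) * (p / 2 * (1 + C) ^ (p / 2 - 2)) ≤
      p * (w ^ 2 + μ ^ 2) ^ (p / 2 - 2) * (μ ^ 2 + (p - 1) * w ^ 2) := by
  have hμ2 : 0 < μ ^ 2 := by positivity
  have hC0 : 0 ≤ C := nonneg_of_mul_nonneg_left ((sq_nonneg w).trans hC) hμ2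
  have hsum : w ^ 2 + μ ^ 2 ≤ (1 + C) * μ ^ 2 := by linarith
  calc (μ ^ 2) ^ (p / 2 - 1) * (p / 2 * (1 + C) ^ (p / 2 - 2))
      = p * ((1 + C) * μ ^ 2) ^ (p / 2 - 2) * (μ ^ 2 / 2) := by
        rw [Real.mul_rpow (by linarith) hμ2.le, show p / 2 - 1 = p / 2 - 2 + 1 by ring,
          Real.rpow_add_one hμ2.ne']
        ring
    _ ≤ p * (w ^ 2 + μ ^ 2) ^ (p / 2 - 2) * (μ ^ 2 + (p - 1) * w ^ 2) := by
        gcongr p * ?_ * ?_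
        exact Real.rpow_le_rpow_of_nonpos (by positivity) hsum (by linarith)

/-- quantitative core of the blow-up of the smoothed Hessian. If
`wₖ → 0`, `μₖ → 0`, `μₖ > 0` and eventually `μₖ² ≥ γ |wₖ|^{2/(2−p)}` with `γ > 0`,
then eventually `μₖ² + (p−1) wₖ² ≥ 0`, `(p−1) wₖ²/μₖ² → 0` (with
`|wₖ²/μₖ²| ≤ 1/γ` eventually if `p = 1`), and
`p (wₖ² + μₖ²)^{p/2−2} (μₖ² + (p−1) wₖ²) → ∞`. -/
theorem hessian_blowup_core (p γ : ℝ) (hp : 0 < p) (hp1 : p ≤ 1) (hγ : 0 < γ)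
    (w μ : ℕ → ℝ) (hμpos : ∀ k, 0 < μ k)
    (hw : Tendsto w atTop (nhds 0)) (hμ : Tendsto μ atTop (nhds 0))
    (hbound : ∀ᶠ k in atTop, γ * |w k| ^ (2 / (2 - p)) ≤ (μ k) ^ 2) :
    (∀ᶠ k in atTop, 0 ≤ (μ k) ^ 2 + (p - 1) * (w k) ^ 2) ∧
    Tendsto (fun k => (p - 1) * (w k) ^ 2 / (μ k) ^ 2) atTop (nhds 0) ∧
    (p = 1 → ∀ᶠ k in atTop, |(w k) ^ 2 / (μ k) ^ 2| ≤ 1 / γ) ∧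
    Tendsto
      (fun k => p * ((w k) ^ 2 + (μ k) ^ 2) ^ (p / 2 - 2) * ((μ k) ^ 2 + (p - 1) * (w k) ^ 2))
      atTop atTop := by
  have hμ0 : ∀ k, μ k ≠ 0 := fun k => (hμpos k).ne'
  have hratio := eventually_sq_div_sq_le_inv hp1 hγ hμ0 hw hbound
  have hpert := tendsto_sub_one_mul_sq_div_sq hp1 hγ hμ0 hw hbound
  have hhalf : ∀ᶠ k in atTop, μ k ^ 2 / 2 ≤ μ k ^ 2 + (p - 1) * w k ^ 2 := by
    filter_upwards [hpert.eventually (eventually_ge_nhds (by norm_num : -(1 / 2 : ℝ) < 0))]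
      with k hk
    rw [le_div_iff₀ (pow_pos (hμpos k) 2)] at hk
    linarith
  refine ⟨hhalf.mono fun k hk => (half_pos (pow_pos (hμpos k) 2)).le.trans hk, hpert,
    fun _ => hratio.mono fun k hk => by rwa [abs_of_nonneg (by positivity), one_div], ?_⟩
  refine tendsto_atTop_mono' atTop ?_
    ((tendsto_sq_rpow_atTop (p := p) (by linarith) hμ0 hμ).atTop_mul_const
      (by positivity : 0 < p / 2 * (1 + γ⁻¹) ^ (p / 2 - 2)))
  filter_upwards [hratio, hhalf] with k hk hk'
  exact mul_rpow_le_hessian_entry hp.le (by linarith) (hμ0 k)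
    ((div_le_iff₀ (pow_pos (hμpos k) 2)).1 hk) hk'
end
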